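/- arXiv:2009.07630 — 2 statements merged into one kernel-verified Lean document; each statement's English description precedes it below -/
import Mathlib

section
/- Let M be a loopless matroid with weights x : E → ℝ, B an x-optimal basis, and e ∈ B. Then the min-max weight μ_e(x) equals the minimum weight of an element in the fundamental cut D(e,B) = {f ∉ B : (B - e) + f is a basis}. -/
/-!
Fix the cut `D = D(e, B)`. Every circuit `C ∋ e` meets the cocircuit `E - cl(B - e) = D ∪ {e}`
in a second element `f ∈ D`, so `max (C - e) ≥ x f ≥ min D`. Conversely, for `f ∈ D` the
fundamental circuit of `f` with respect to `B` contains `e`, and by optimality of `B` (the cycle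
property) every element of it weighs at most `x f`. Hence the two infima are taken over mutually
dominating sets.
-/

open Matroid Set

variable {α : Type*}

/-- A circuit of a matroid: a minimal dependent set. -/
def Matroid.IsCircuit' (M : Matroid α) (C : Set α) : Prop :=
  M.Dep C ∧ ∀ ⦃D⦄, D ⊂ C → M.Indep D

/-- Looplessness in the sense of the paper: no element is a loop
(every singleton of the ground set is independent) and no element is a
coloop (no element lies in all bases). -/
def Matroid.PaperLoopless (M : Matroid α) : Prop :=
  ∀ e ∈ M.E, M.Indep {e} ∧ ∃ B, M.IsBase B ∧ e ∉ B

/-- The weight `x(B)` of a set of ground elements. -/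
noncomputable def setWeight (x : α → ℝ) (B : Set α) : ℝ := ∑ᶠ e ∈ B, x e

/-- The min-max weight `μ_e(x)`: the minimum over circuits `C` containing `e`
of the maximum weight of an element of `C - e`. -/
noncomputable def muWeight (M : Matroid α) (x : α → ℝ) (e : α) : ℝ :=
  sInf {w | ∃ C, M.IsCircuit' C ∧ e ∈ C ∧ w = sSup (x '' (C \ {e}))}

/-- The bottleneck weight `b_e(x) = min {x(e), μ_e(x)}`. -/
noncomputable def bottleneck (M : Matroid α) (x : α → ℝ) (e : α) : ℝ :=
  min (x e) (muWeight M x e)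

/-- The minimum weight of a basis of `M`. -/
noncomputable def mwb (M : Matroid α) (x : α → ℝ) : ℝ :=
  sInf {w | ∃ B, M.IsBase B ∧ w = setWeight x B}

/-- `B` is an `x`-optimal basis of `M`. -/
def IsOptimalBase (M : Matroid α) (x : α → ℝ) (B : Set α) : Prop :=
  M.IsBase B ∧ ∀ B', M.IsBase B' → setWeight x B ≤ setWeight x B'

/-- Deletion of a single element. -/
noncomputable def Matroid.del (M : Matroid α) (e : α) : Matroid α :=
  M ↾ (M.E \ {e})

/-- Contraction of a single element, defined by duality: `M/e = (M✶ \ e)✶`. -/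
noncomputable def Matroid.con (M : Matroid α) (e : α) : Matroid α :=
  ((M✶ ↾ (M.E \ {e}))✶)

def Matroid.fundCut (M : Matroid α) (e : α) (B : Set α) : Set α :=
  {f ∈ M.E \ B | M.IsBase (insert f (B \ {e}))}

namespace Matroid

variable {M : Matroid α} {B C : Set α} {e f g : α}

lemma isCircuit'_iff : M.IsCircuit' C ↔ M.IsCircuit C :=
  isCircuit_iff_forall_ssubset.symm

lemma IsCircuit.exists_mem_fundCut (hC : M.IsCircuit C) (hB : M.IsBase B) (heB : e ∈ B)
    (heC : e ∈ C) : ∃ f ∈ C \ {e}, f ∈ M.fundCut e B := by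
  have hK := hB.compl_closure_sdiff_singleton_isCocircuit heB
  have heK : e ∈ M.E \ M.closure (B \ {e}) :=
    ⟨hB.subset_ground heB, hB.indep.notMem_closure_sdiff_of_mem heB⟩
  obtain ⟨f, ⟨hfC, hfE, hfcl⟩, hfe⟩ :=
    (hC.isCocircuit_inter_nontrivial hK ⟨e, heC, heK⟩).exists_ne e
  have hfB : f ∉ B := fun hfB ↦
    hfcl (M.subset_closure _ (sdiff_subset.trans hB.subset_ground) ⟨hfB, hfe⟩)
  exact ⟨f, ⟨hfC, hfe⟩, ⟨hfE, hfB⟩, hB.exchange_base_of_notMem_closure heB hfcl⟩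

lemma IsBase.mem_fundCircuit_of_mem_fundCut (hB : M.IsBase B) (hf : f ∈ M.fundCut e B) :
    e ∈ M.fundCircuit f B := by
  obtain rfl | hef := eq_or_ne e f
  · exact M.mem_fundCircuit e B
  rw [hB.indep.mem_fundCircuit_iff (hB.closure_eq ▸ hf.1.1) hf.1.2,
    ← insert_sdiff_singleton_comm hef.symm]
  exact hf.2.indep

end Matroid

section Weights

variable {M : Matroid α} {B : Set α} {x : α → ℝ} {f g : α}

lemma setWeight_insert_sdiff_add (x : α → ℝ) (hB : B.Finite) (hg : g ∈ B) (hf : f ∉ B) :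
    setWeight x (insert f B \ {g}) + x g = setWeight x B + x f := by
  rw [add_comm, setWeight,
    ← finsum_mem_insert x (notMem_sdiff_of_mem (mem_singleton g)) (hB.insert f).sdiff,
    insert_sdiff_singleton, insert_eq_of_mem (mem_insert_of_mem f hg), finsum_mem_insert x hf hB,
    add_comm, setWeight]

lemma IsOptimalBase.le_of_isBase_exchange [M.RankFinite] (hB : IsOptimalBase M x B) (hg : g ∈ B)
    (hf : f ∉ B) (hB' : M.IsBase (insert f B \ {g})) : x g ≤ x f := by
  have := setWeight_insert_sdiff_add x hB.1.finite hg hf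
  linarith [hB.2 _ hB']

lemma IsOptimalBase.le_of_mem_fundCircuit [M.RankFinite] (hB : IsOptimalBase M x B)
    (hf : f ∈ M.E \ B) (hg : g ∈ M.fundCircuit f B) : x g ≤ x f := by
  obtain rfl | hgf := eq_or_ne g f
  · rfl
  have hgB : g ∈ B := (M.fundCircuit_subset_insert f B hg).resolve_left hgf
  have hI := (hB.1.indep.mem_fundCircuit_iff (hB.1.closure_eq ▸ hf.1) hf.2).1 hg
  exact hB.le_of_isBase_exchange hgB hf.2 (hB.1.exchange_isBase_of_indep' hgB hf.2 hI)

end Weights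

theorem stmt5_general (M : Matroid α) [M.Finite]
    (x : α → ℝ) {B : Set α} (hB : IsOptimalBase M x B) {e : α} (heB : e ∈ B) :
    muWeight M x e = sInf (x '' {f ∈ M.E \ B | M.IsBase (insert f (B \ {e}))}) := by
  refine csInf_eq_csInf_of_forall_exists_le ?_ ?_
  · rintro _ ⟨C, hC, heC, rfl⟩
    obtain ⟨f, hfC, hfD⟩ := (isCircuit'_iff.1 hC).exists_mem_fundCut hB.1 heB heC
    have hCfin : (x '' (C \ {e})).Finite := ((isCircuit'_iff.1 hC).finite.sdiff).image x
    exact ⟨x f, mem_image_of_mem x hfD, le_csSup hCfin.bddAbove (mem_image_of_mem x hfC)⟩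
  · rintro _ ⟨f, hfD, rfl⟩
    have hfe : f ≠ e := fun h ↦ hfD.1.2 (h ▸ heB)
    have hC := hB.1.fundCircuit_isCircuit hfD.1.1 hfD.1.2
    refine ⟨_, ⟨_, isCircuit'_iff.2 hC, hB.1.mem_fundCircuit_of_mem_fundCut hfD, rfl⟩, ?_⟩
    refine csSup_le ⟨x f, mem_image_of_mem x ⟨M.mem_fundCircuit f B, hfe⟩⟩ ?_
    rintro _ ⟨g, hg, rfl⟩
    exact hB.le_of_mem_fundCircuit hfD.1 hg.1

/-- for an optimal basis `B` and `e ∈ B`, `μ_e(x)` equals the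
minimum weight of an element of the fundamental cut of `e`. -/
theorem stmt5 (M : Matroid α) [M.Finite] (hM : M.PaperLoopless)
    (x : α → ℝ) {B : Set α} (hB : IsOptimalBase M x B) {e : α} (heB : e ∈ B) :
    muWeight M x e = sInf (x '' {f ∈ M.E \ B | M.IsBase (insert f (B \ {e}))}) :=
  stmt5_general M x hB heB
end

section
/- Let M be a loopless matroid with weights x : E → ℝ, B an x-optimal basis, and e ∈ B. Then the minimum weight of a basis avoiding e equals x(B) - x(e) + μ_e(x). -/
/-! If a basis `B'` avoids `e`, the fundamental circuit of `e` in `B'` contains an element `f` of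
weight at least `μ_e(x)`, and `B' - f + e` is a basis, so optimality of `B` gives
`x(B) - x(e) + μ_e(x) ≤ x(B')`. Conversely, let `C ∋ e` be a circuit realizing `μ_e(x)`. Since
`e ∈ cl(C - e)` but `e ∉ cl(B - e)`, some `f ∈ C - e` lies outside `cl(B - e)`, and then
`B - e + f` is a basis avoiding `e` of weight at most `x(B) - x(e) + μ_e(x)`. -/

open Matroid Set

variable {α : Type*}

theorem Matroid.isCircuit'_iff_s6 {M : Matroid α} {C : Set α} : M.IsCircuit' C ↔ M.IsCircuit C :=
  isCircuit_iff_forall_ssubset.symm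

lemma setWeight_insert_sdiff_singleton (x : α → ℝ) {B : Set α} (hB : B.Finite) {e f : α}
    (he : e ∈ B) (hf : f ∉ B) : setWeight x (insert f B \ {e}) = setWeight x B - x e + x f := by
  have hfe : f ≠ e := (ne_of_mem_of_not_mem he hf).symm
  rw [← insert_sdiff_singleton_comm hfe]
  nth_rw 2 [← insert_sdiff_self_of_mem he]
  unfold setWeight
  rw [finsum_mem_insert _ (fun h ↦ hf h.1) hB.sdiff, finsum_mem_insert _ (by simp) hB.sdiff]
  ring

namespace Matroid

variable {M : Matroid α} {B C : Set α} {e f : α}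

lemma IsBase.isBase_insert_sdiff_of_mem_fundCircuit (hB : M.IsBase B) (heE : e ∈ M.E)
    (heB : e ∉ B) (hf : f ∈ M.fundCircuit e B \ {e}) : M.IsBase (insert e B \ {f}) := by
  have hfB : f ∈ B := (fundCircuit_subset_insert M e B hf.1).resolve_left hf.2
  refine hB.exchange_isBase_of_indep' hfB heB ?_
  exact (hB.indep.mem_fundCircuit_iff (by rwa [hB.closure_eq]) heB).1 hf.1

lemma IsCircuit.exists_isBase_insert_sdiff (hC : M.IsCircuit C) (heC : e ∈ C) (hB : M.IsBase B)
    (heB : e ∈ B) : ∃ f ∈ C \ B, M.IsBase (insert f B \ {e}) := by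
  have hecl : e ∉ M.closure (B \ {e}) := hB.indep.notMem_closure_sdiff_of_mem heB
  obtain ⟨f, hfC, hfcl⟩ : ∃ f ∈ C \ {e}, f ∉ M.closure (B \ {e}) := by
    by_contra! h
    exact hecl (M.closure_subset_closure_of_subset_closure h
      (hC.mem_closure_sdiff_singleton_of_mem heC))
  have hfB : f ∉ B := fun hfB ↦
    hfcl (M.subset_closure _ (sdiff_subset.trans hB.subset_ground) ⟨hfB, hfC.2⟩)
  refine ⟨f, ⟨hfC.1, hfB⟩, ?_⟩
  rw [← insert_sdiff_singleton_comm hfC.2]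
  exact hB.exchange_base_of_notMem_closure heB hfcl (hC.subset_ground hfC.1)

section muWeight

def circuitMaxWeights (M : Matroid α) (x : α → ℝ) (e : α) : Set ℝ :=
  {w | ∃ C, M.IsCircuit' C ∧ e ∈ C ∧ w = sSup (x '' (C \ {e}))}

lemma muWeight_eq_sInf_circuitMaxWeights (x : α → ℝ) :
    muWeight M x e = sInf (circuitMaxWeights M x e) :=
  rfl

variable [M.Finite] (x : α → ℝ)

lemma finite_circuitMaxWeights : (circuitMaxWeights M x e).Finite := by
  refine (M.ground_finite.finite_subsets.image fun C ↦ sSup (x '' (C \ {e}))).subset ?_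
  rintro _ ⟨C, hC, -, rfl⟩
  exact ⟨C, hC.1.subset_ground, rfl⟩

lemma exists_mem_sdiff_muWeight_le (hC : M.IsCircuit C) (heC : e ∈ C) (he : M.Indep {e}) :
    ∃ f ∈ C \ {e}, muWeight M x e ≤ x f := by
  have hne : (C \ {e}).Nonempty := by
    rw [nonempty_iff_ne_empty, Ne, sdiff_eq_empty]
    exact fun hCe ↦ hC.not_indep (he.subset hCe)
  obtain ⟨f, hfC, hfmax⟩ :=
    (hne.image x).csSup_mem ((M.set_finite C hC.subset_ground).sdiff.image x)
  refine ⟨f, hfC, hfmax ▸ csInf_le (finite_circuitMaxWeights x).bddBelow ?_⟩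
  exact ⟨C, isCircuit'_iff_s6.2 hC, heC, rfl⟩

lemma exists_isCircuit_forall_le_muWeight (hC : M.IsCircuit C) (heC : e ∈ C) :
    ∃ C, M.IsCircuit C ∧ e ∈ C ∧ ∀ f ∈ C \ {e}, x f ≤ muWeight M x e := by
  obtain ⟨C₀, hC₀, heC₀, hμ⟩ :=
    Nonempty.csInf_mem (s := circuitMaxWeights M x e) ⟨_, C, isCircuit'_iff_s6.2 hC, heC, rfl⟩
      (finite_circuitMaxWeights x)
  refine ⟨C₀, isCircuit'_iff_s6.1 hC₀, heC₀, fun f hf ↦ ?_⟩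
  rw [muWeight_eq_sInf_circuitMaxWeights, hμ]
  exact le_csSup ((M.set_finite C₀ hC₀.1.subset_ground).sdiff.image x).bddAbove ⟨f, hf, rfl⟩

end muWeight

end Matroid

lemma IsOptimalBase.sub_add_muWeight_le {M : Matroid α} [M.Finite] {x : α → ℝ} {B B' : Set α}
    {e : α} (hB : IsOptimalBase M x B) (heB : e ∈ B) (hB' : M.IsBase B') (heB' : e ∉ B') :
    setWeight x B - x e + muWeight M x e ≤ setWeight x B' := by
  have heE : e ∈ M.E := hB.1.subset_ground heB
  obtain ⟨f, hf, hμf⟩ := exists_mem_sdiff_muWeight_le x (hB'.fundCircuit_isCircuit heE heB')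
    (M.mem_fundCircuit e B') (hB.1.indep.subset (singleton_subset_iff.2 heB))
  have hfB' : f ∈ B' := (fundCircuit_subset_insert M e B' hf.1).resolve_left hf.2
  have hexch := hB.2 _ (hB'.isBase_insert_sdiff_of_mem_fundCircuit heE heB' hf)
  rw [setWeight_insert_sdiff_singleton x (M.set_finite B' hB'.subset_ground) hfB' heB'] at hexch
  linarith

/-- the minimum weight of a basis avoiding `e` is
`x(B) - x(e) + μ_e(x)`. -/
theorem stmt6 (M : Matroid α) [M.Finite] (hM : M.PaperLoopless)
    (x : α → ℝ) {B : Set α} (hB : IsOptimalBase M x B) {e : α} (heB : e ∈ B) :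
    sInf {w | ∃ B', M.IsBase B' ∧ e ∉ B' ∧ w = setWeight x B'} =
      setWeight x B - x e + muWeight M x e := by
  have heE : e ∈ M.E := hB.1.subset_ground heB
  obtain ⟨-, B₀, hB₀, heB₀⟩ := hM e heE
  obtain ⟨C, hC, heC, hCμ⟩ := exists_isCircuit_forall_le_muWeight x
    (hB₀.fundCircuit_isCircuit heE heB₀) (M.mem_fundCircuit e B₀)
  obtain ⟨f, ⟨hfC, hfB⟩, hBf⟩ := hC.exists_isBase_insert_sdiff heC hB.1 heB
  have hfe : f ≠ e := fun hfe ↦ hfB (hfe ▸ heB)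
  have heBf : e ∉ insert f B \ {e} := fun h ↦ h.2 rfl
  refine IsLeast.csInf_eq
    ⟨⟨_, hBf, heBf, le_antisymm (hB.sub_add_muWeight_le heB hBf heBf) ?_⟩, ?_⟩
  · rw [setWeight_insert_sdiff_singleton x (M.set_finite B hB.1.subset_ground) heB hfB]
    linarith [hCμ f ⟨hfC, hfe⟩]
  · rintro _ ⟨B', hB', heB', rfl⟩
    exact hB.sub_add_muWeight_le heB hB' heB'
end
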